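/- arXiv:2307.10855 — 3 statements merged into one kernel-verified Lean document; each statement's English description precedes it below -/
import Mathlib

section
/- Let {x₁,…,x_s} ⊂ Rⁿ be nonzero vectors whose span has dimension s−1 (with x₁,…,x_{s−1} linearly independent). Then the n × n² matrix B := Σ_{i=1}^s xᵢ (xᵢ ⊗ xᵢ)ᵀ has rank at least s−2. Moreover, rank(B) = s−2 if and only if xᵢ = −x_j for some pair i ≠ j. -/
/-!
Let `T c = ∑ₖ cₖ • xₖ`. Column `(p, q)` of `B` is `T (rₚ * r_q)`, where `rₚ = (xₖ p)ₖ` and the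
product is pointwise. As the `xₖ` span a space of dimension `s - 1`, `ker T` is a line `ℝ ∙ c`,
and the `rₚ` span the hyperplane `c^⊥`; so the column space of `B` contains `T (y * z)` for all
`y, z ⊥ c`. Taking `y, z` supported on two coordinates puts into it every `xₖ` except possibly
two, `xᵢ` and `xⱼ` with `cᵢ, cⱼ ≠ 0`, and also `xᵢ` unless `c` is supported on `{i, j}` with
`cᵢ = cⱼ`, that is, unless `xᵢ = -xⱼ`. Since `{xₖ : k ≠ j}` is linearly independent, this gives
`rank B ≥ s - 2`, and `rank B ≥ s - 1` when no `xᵢ = -xⱼ`. Conversely, if `xᵢ = -xⱼ` then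
the terms `i` and `j` of `B` cancel, the cube being odd, and `s - 2` rank-one terms remain.
-/

open Matrix Module Submodule Set

theorem LinearIndepOn.card_le_finrank_of_forall_mem {𝕜 ι V : Type*} [Field 𝕜] [AddCommGroup V]
    [Module 𝕜 V] {v : ι → V} {s : Finset ι} (hv : LinearIndepOn 𝕜 v ↑s) {W : Submodule 𝕜 V}
    [FiniteDimensional 𝕜 W] (hW : ∀ k ∈ s, v k ∈ W) : s.card ≤ finrank 𝕜 W := by
  have : LinearIndependent 𝕜 (fun k : (s : Set ι) => (⟨v k, hW k k.2⟩ : W)) :=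
    LinearIndependent.of_comp W.subtype hv
  simpa using this.fintype_card_le_finrank

section Field

variable {𝕜 ι n : Type*} [Field 𝕜] [Fintype ι]

/-- `∑ₖ xₖ (xₖ ⊗ xₖ)ᵀ`, with the columns indexed by pairs `(p, q)`. -/
def cubeSum (x : ι → n → 𝕜) : Matrix n (n × n) 𝕜 :=
  Matrix.of fun i p => ∑ k, x k i * (x k p.1 * x k p.2)

variable (x : ι → n → 𝕜)

local notation "T" => Fintype.linearCombination 𝕜 x

theorem cubeSum_col (p q : n) :
    (cubeSum x).col (p, q) = T ((of x).col p * (of x).col q) := by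
  ext i
  simp only [cubeSum, col_apply, of_apply, Fintype.linearCombination_apply, Finset.sum_apply,
    Pi.mul_apply]
  exact Finset.sum_congr rfl fun k _ => mul_comm _ _

theorem linearCombination_mul_mem_span_cubeSum_cols {y z : ι → 𝕜}
    (hy : y ∈ span 𝕜 (range (of x).col)) (hz : z ∈ span 𝕜 (range (of x).col)) :
    T (y * z) ∈ span 𝕜 (range (cubeSum x).col) := by
  have h : span 𝕜 (range (of x).col) * span 𝕜 (range (of x).col) ≤
      (span 𝕜 (range (cubeSum x).col)).comap T := by
    rw [span_mul_span, span_le]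
    rintro _ ⟨_, ⟨p, rfl⟩, _, ⟨q, rfl⟩, rfl⟩
    rw [SetLike.mem_coe, mem_comap, ← cubeSum_col]
    exact subset_span ⟨(p, q), rfl⟩
  exact h (mul_mem_mul hy hz)

theorem exists_ker_linearCombination_eq_span_singleton (hι : 1 ≤ Fintype.card ι)
    (hrank : finrank 𝕜 (span 𝕜 (range x)) = Fintype.card ι - 1) :
    ∃ c ≠ 0, LinearMap.ker T = 𝕜 ∙ c := by
  have hker : finrank 𝕜 (LinearMap.ker T) = 1 := by
    have := LinearMap.finrank_range_add_finrank_ker T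
    rw [Fintype.range_linearCombination, hrank, finrank_fintype_fun_eq_card] at this
    omega
  obtain ⟨c, hc, hc0⟩ := (Submodule.ne_bot_iff (LinearMap.ker T)).mp fun h => by
    rw [h, finrank_bot] at hker
    exact zero_ne_one hker
  exact ⟨c, hc0, eq_span_singleton_of_mem_of_finrank_eq_one hker hc hc0⟩

variable {x} {c : ι → 𝕜}

theorem finrank_span_range_of_ker_eq_span_singleton (hc : c ≠ 0)
    (hker : LinearMap.ker T = 𝕜 ∙ c) : finrank 𝕜 (span 𝕜 (range x)) = Fintype.card ι - 1 := by
  have := LinearMap.finrank_range_add_finrank_ker T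
  rw [Fintype.range_linearCombination, hker, finrank_span_singleton hc,
    finrank_fintype_fun_eq_card] at this
  omega

theorem linearIndepOn_of_ker_eq_span_singleton (hker : LinearMap.ker T = 𝕜 ∙ c) {j : ι}
    (hcj : c j ≠ 0) {s : Set ι} (hj : j ∉ s) : LinearIndepOn 𝕜 x s := by
  rw [linearIndepOn_iff]
  intro l hl hl0
  have hmem : ⇑l ∈ 𝕜 ∙ c := by
    rw [← hker, LinearMap.mem_ker, ← hl0, Finsupp.linearCombination_apply, Finsupp.sum_fintype]
    · rfl
    · simp
  obtain ⟨r, hr⟩ := mem_span_singleton.mp hmem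
  have hr0 : r = 0 := by
    have hlj : l j = 0 := Finsupp.notMem_support_iff.mp fun h => hj (hl h)
    have := congrFun hr j
    rw [Pi.smul_apply, smul_eq_mul, hlj] at this
    exact (mul_eq_zero.mp this).resolve_right hcj
  ext k
  simpa [hr0] using (congrFun hr k).symm

theorem exists_ne_apply_ne_zero (hx : ∀ k, x k ≠ 0) (hc : c ≠ 0) (hTc : T c = 0) :
    ∃ i j, i ≠ j ∧ c i ≠ 0 ∧ c j ≠ 0 := by
  classical
  obtain ⟨i, hi⟩ := Function.ne_iff.mp hc
  by_contra! h
  have : c = Pi.single i (c i) := by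
    ext k
    rcases eq_or_ne k i with rfl | hk
    · simp
    · simpa [hk] using h i k hk.symm hi
  rw [this, Fintype.linearCombination_apply_single] at hTc
  exact hx i ((smul_eq_zero.mp hTc).resolve_left hi)

theorem mem_span_range_col_of_dotProduct_eq_zero [Fintype n] (hc : c ≠ 0)
    (hker : LinearMap.ker T = 𝕜 ∙ c) {y : ι → 𝕜} (hy : c ⬝ᵥ y = 0) :
    y ∈ span 𝕜 (range (of x).col) := by
  classical
  have hTc : T c = 0 := hker.ge (mem_span_singleton_self c)
  set H := LinearMap.ker (dotProductBilin 𝕜 𝕜 c)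
  have hle : span 𝕜 (range (of x).col) ≤ H := by
    rw [span_le]
    rintro _ ⟨p, rfl⟩
    simpa [H, dotProduct, Fintype.linearCombination_apply, Finset.sum_apply] using congrFun hTc p
  have hH : H ≠ ⊤ := by
    obtain ⟨j, hj⟩ := Function.ne_iff.mp hc
    refine fun h => hj ?_
    simpa [H, dotProduct_single] using (h ▸ mem_top : Pi.single j 1 ∈ H)
  -- column rank = row rank: the columns of `of x` span a space of dimension `card ι - 1`, as H does
  have heq : span 𝕜 (range (of x).col) = H := by
    refine eq_of_le_of_finrank_le hle ?_
    rw [← rank_eq_finrank_span_cols, rank_eq_finrank_span_row]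
    have := Submodule.finrank_lt hH
    rw [finrank_fintype_fun_eq_card] at this
    change _ ≤ finrank 𝕜 (span 𝕜 (range x))
    rw [finrank_span_range_of_ker_eq_span_singleton hc hker]
    omega
  exact heq ▸ (show y ∈ H by simpa [H] using hy)

theorem linearCombination_mul_mem_span_cubeSum_cols_of_dotProduct_eq_zero [Fintype n]
    (hc : c ≠ 0) (hker : LinearMap.ker T = 𝕜 ∙ c) {y z : ι → 𝕜} (hy : c ⬝ᵥ y = 0)
    (hz : c ⬝ᵥ z = 0) : T (y * z) ∈ span 𝕜 (range (cubeSum x).col) :=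
  linearCombination_mul_mem_span_cubeSum_cols x
    (mem_span_range_col_of_dotProduct_eq_zero hc hker hy)
    (mem_span_range_col_of_dotProduct_eq_zero hc hker hz)

theorem dotProduct_single_sub_single [DecidableEq ι] (c : ι → 𝕜) (i j : ι) :
    c ⬝ᵥ (Pi.single i (c j) - Pi.single j (c i)) = 0 := by
  rw [dotProduct_sub, dotProduct_single, dotProduct_single, mul_comm, sub_self]

theorem mem_span_cubeSum_cols_of_apply_eq_zero [Fintype n] [DecidableEq ι] (hc : c ≠ 0)
    (hker : LinearMap.ker T = 𝕜 ∙ c) {k : ι} (hck : c k = 0) :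
    x k ∈ span 𝕜 (range (cubeSum x).col) := by
  have hk : c ⬝ᵥ Pi.single k 1 = 0 := by rw [dotProduct_single, hck, zero_mul]
  have := linearCombination_mul_mem_span_cubeSum_cols_of_dotProduct_eq_zero hc hker hk hk
  rwa [← Pi.single_mul, one_mul, Fintype.linearCombination_apply_single, one_smul] at this

theorem mem_span_cubeSum_cols_of_two_apply_ne_zero [Fintype n] [DecidableEq ι] (hc : c ≠ 0)
    (hker : LinearMap.ker T = 𝕜 ∙ c) {m a b : ι} (hma : m ≠ a) (hmb : m ≠ b) (hab : a ≠ b)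
    (hca : c a ≠ 0) (hcb : c b ≠ 0) : x m ∈ span 𝕜 (range (cubeSum x).col) := by
  have := linearCombination_mul_mem_span_cubeSum_cols_of_dotProduct_eq_zero hc hker
    (dotProduct_single_sub_single c m a) (dotProduct_single_sub_single c m b)
  have hprod : (Pi.single m (c a) - Pi.single a (c m)) * (Pi.single m (c b) - Pi.single b (c m))
      = (Pi.single m (c a * c b) : ι → 𝕜) := by
    ext t
    by_cases htm : t = m <;> by_cases hta : t = a <;> by_cases htb : t = b <;> simp_all
  rwa [hprod, Fintype.linearCombination_apply_single, smul_mem_iff _ (mul_ne_zero hca hcb)] at this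

theorem mem_span_cubeSum_cols_of_smul_add_smul_eq_zero [Fintype n] [DecidableEq ι] (hc : c ≠ 0)
    (hker : LinearMap.ker T = 𝕜 ∙ c) {i j : ι} (hij : i ≠ j)
    (hpair : c i • x i + c j • x j = 0) (hcube : c i ^ 3 ≠ c j ^ 3) :
    x i ∈ span 𝕜 (range (cubeSum x).col) := by
  have := linearCombination_mul_mem_span_cubeSum_cols_of_dotProduct_eq_zero hc hker
    (dotProduct_single_sub_single c i j) (dotProduct_single_sub_single c i j)
  have hprod : (Pi.single i (c j) - Pi.single j (c i)) * (Pi.single i (c j) - Pi.single j (c i))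
      = (Pi.single i (c j ^ 2) + Pi.single j (c i ^ 2) : ι → 𝕜) := by
    ext t
    by_cases hti : t = i <;> by_cases htj : t = j <;> simp_all [sq]
  rw [hprod, map_add, Fintype.linearCombination_apply_single,
    Fintype.linearCombination_apply_single] at this
  -- multiplying by `cⱼ` and substituting `cⱼ • xⱼ = -(cᵢ • xᵢ)` leaves a multiple of `xᵢ`
  have hxj : c j • x j = -(c i • x i) := eq_neg_of_add_eq_zero_right hpair
  have key : c j • (c j ^ 2 • x i + c i ^ 2 • x j) = (c j ^ 3 - c i ^ 3) • x i := by
    rw [smul_add, smul_smul, smul_comm (c j) (c i ^ 2), hxj, smul_neg, smul_smul, sub_smul]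
    ring_nf
  rw [← smul_mem_iff _ (sub_ne_zero.mpr hcube.symm), ← key]
  exact smul_mem _ _ this

theorem mem_span_cubeSum_cols_of_ne [Fintype n] [DecidableEq ι] (hc : c ≠ 0)
    (hker : LinearMap.ker T = 𝕜 ∙ c) {i j k : ι} (hij : i ≠ j) (hci : c i ≠ 0) (hcj : c j ≠ 0)
    (hki : k ≠ i) (hkj : k ≠ j) : x k ∈ span 𝕜 (range (cubeSum x).col) := by
  by_cases hck : c k = 0
  · exact mem_span_cubeSum_cols_of_apply_eq_zero hc hker hck
  · exact mem_span_cubeSum_cols_of_two_apply_ne_zero hc hker hki hkj hij hci hcj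

theorem mem_span_cubeSum_cols_or_eq_neg [LinearOrder 𝕜] [IsStrictOrderedRing 𝕜] [Fintype n]
    [DecidableEq ι] (hc : c ≠ 0) (hker : LinearMap.ker T = 𝕜 ∙ c) {i j : ι} (hij : i ≠ j)
    (hcj : c j ≠ 0) : x i ∈ span 𝕜 (range (cubeSum x).col) ∨ x i = -x j := by
  by_cases hthird : ∃ k, k ≠ i ∧ k ≠ j ∧ c k ≠ 0
  · obtain ⟨k, hki, hkj, hck⟩ := hthird
    exact .inl (mem_span_cubeSum_cols_of_two_apply_ne_zero hc hker hij hki.symm hkj.symm hcj hck)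
  push Not at hthird
  have hpair : c i • x i + c j • x j = 0 := by
    rw [← show T c = 0 from hker.ge (mem_span_singleton_self c),
      Fintype.linearCombination_apply, Finset.sum_eq_add i j hij
        (fun k _ hk => by rw [hthird k hk.1 hk.2, zero_smul]) (by simp) (by simp)]
  by_cases hcube : c i ^ 3 = c j ^ 3
  · rw [(Odd.pow_inj (by decide)).mp hcube, ← smul_add] at hpair
    exact .inr (eq_neg_of_add_eq_zero_left ((smul_eq_zero.mp hpair).resolve_left hcj))
  · exact .inl (mem_span_cubeSum_cols_of_smul_add_smul_eq_zero hc hker hij hpair hcube)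

theorem card_sub_two_le_finrank_span_cubeSum_cols [Fintype n] [DecidableEq ι] (hc : c ≠ 0)
    (hker : LinearMap.ker T = 𝕜 ∙ c) {i j : ι} (hij : i ≠ j) (hci : c i ≠ 0) (hcj : c j ≠ 0) :
    Fintype.card ι - 2 ≤ finrank 𝕜 (span 𝕜 (range (cubeSum x).col)) := by
  have := (linearIndepOn_of_ker_eq_span_singleton hker hcj (s := ↑({i, j}ᶜ : Finset ι))
    (by simp)).card_le_finrank_of_forall_mem fun k hk => by
      simp only [Finset.mem_compl, Finset.mem_insert, Finset.mem_singleton, not_or] at hk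
      exact mem_span_cubeSum_cols_of_ne hc hker hij hci hcj hk.1 hk.2
  rwa [Finset.card_compl, Finset.card_pair hij] at this

theorem card_sub_one_le_finrank_span_cubeSum_cols [Fintype n] [DecidableEq ι] (hc : c ≠ 0)
    (hker : LinearMap.ker T = 𝕜 ∙ c) {i j : ι} (hij : i ≠ j) (hci : c i ≠ 0) (hcj : c j ≠ 0)
    (hxi : x i ∈ span 𝕜 (range (cubeSum x).col)) :
    Fintype.card ι - 1 ≤ finrank 𝕜 (span 𝕜 (range (cubeSum x).col)) := by
  have := (linearIndepOn_of_ker_eq_span_singleton hker hcj (s := ↑({j}ᶜ : Finset ι))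
    (by simp)).card_le_finrank_of_forall_mem fun k hk => by
      rcases eq_or_ne k i with rfl | hki
      · exact hxi
      · exact mem_span_cubeSum_cols_of_ne hc hker hij hci hcj hki (by simpa using hk)
  rwa [Finset.card_compl, Finset.card_singleton] at this

theorem finrank_span_cubeSum_cols_le_of_eq_neg [Fintype n] [DecidableEq ι] {i j : ι}
    (hij : i ≠ j) (h : x i = -x j) :
    finrank 𝕜 (span 𝕜 (range (cubeSum x).col)) ≤ Fintype.card ι - 2 := by
  classical
  have hle : span 𝕜 (range (cubeSum x).col) ≤ span 𝕜 (x '' ↑({i, j}ᶜ : Finset ι)) := by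
    rw [span_le]
    rintro _ ⟨⟨p, q⟩, rfl⟩
    rw [SetLike.mem_coe, cubeSum_col, Fintype.linearCombination_apply,
      ← Finset.sum_add_sum_compl {i, j}, Finset.sum_pair hij]
    simp only [Pi.mul_apply, col_apply, of_apply, h, Pi.neg_apply, neg_mul_neg, smul_neg,
      neg_add_cancel, zero_add]
    exact sum_mem fun k hk => smul_mem _ _ (subset_span ⟨k, hk, rfl⟩)
  calc finrank 𝕜 (span 𝕜 (range (cubeSum x).col))
      ≤ finrank 𝕜 (span 𝕜 (x '' ↑({i, j}ᶜ : Finset ι))) := finrank_mono hle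
    _ ≤ (({i, j}ᶜ : Finset ι).image x).card := by
      rw [← Finset.coe_image]
      exact finrank_span_finset_le_card _
    _ ≤ ({i, j}ᶜ : Finset ι).card := Finset.card_image_le
    _ = Fintype.card ι - 2 := by rw [Finset.card_compl, Finset.card_pair hij]

end Field

/-- for nonzero vectors x₁,…,x_s spanning a space of dimension s−1,
the matrix B = Σ xᵢ(xᵢ⊗xᵢ)ᵀ has rank at least s−2, with equality iff xᵢ = −x_j for
some i ≠ j. -/
theorem rank_bound_of_defect_one (n s : ℕ) (hs : 1 ≤ s) (x : Fin s → Fin n → ℝ)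
    (hx : ∀ i, x i ≠ 0)
    (hrank : Module.finrank ℝ (Submodule.span ℝ (Set.range x)) = s - 1)
    (B : Matrix (Fin n) (Fin n × Fin n) ℝ)
    (hB : B = Matrix.of fun i p => ∑ k, x k i * (x k p.1 * x k p.2)) :
    s - 2 ≤ B.rank ∧ (B.rank = s - 2 ↔ ∃ i j, i ≠ j ∧ x i = -x j) := by
  have hcard := Fintype.card_fin s
  obtain ⟨c, hc, hker⟩ :=
    exists_ker_linearCombination_eq_span_singleton x (by rwa [hcard]) (by rwa [hcard])
  obtain ⟨i, j, hij, hci, hcj⟩ :=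
    exists_ne_apply_ne_zero hx hc (hker.ge (mem_span_singleton_self c))
  have hlower := card_sub_two_le_finrank_span_cubeSum_cols hc hker hij hci hcj
  rw [hcard] at hlower
  rw [show B = cubeSum x from hB, rank_eq_finrank_span_cols]
  refine ⟨hlower, fun h => ?_, fun ⟨a, b, hab, hneg⟩ =>
    le_antisymm (by simpa using finrank_span_cubeSum_cols_le_of_eq_neg hab hneg) hlower⟩
  obtain hxi | hneg := mem_span_cubeSum_cols_or_eq_neg hc hker hij hcj
  · have := card_sub_one_le_finrank_span_cubeSum_cols hc hker hij hci hcj hxi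
    have := Fintype.one_lt_card_iff_nontrivial.mpr ⟨i, j, hij⟩
    omega
  · exact ⟨i, j, hij, hneg⟩
end

section
/- Let X ∈ R^{m×n}, r ≤ min(m,n), and let Π_{R(r)}(X) be the set of best rank-at-most-r Frobenius approximations of X. If Y ∈ conv(Π_{R(r)}(X)) and rank(Y) ≤ r, then Y ∈ Π_{R(r)}(X). Conversely, every Y ∈ Π_{R(r)}(X) has rank at most r. -/
/-- a convex combination of best rank-at-most-r approximations of X
which itself has rank at most r is a best rank-at-most-r approximation of X;
conversely every best rank-at-most-r approximation has rank at most r. -/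
theorem convexHull_low_rank_projection (m n r : ℕ) (X : Matrix (Fin m) (Fin n) ℝ)
    (S : Set (Matrix (Fin m) (Fin n) ℝ))
    (hS : S = {Y | Y.rank ≤ r ∧ ∀ Z : Matrix (Fin m) (Fin n) ℝ, Z.rank ≤ r →
        ∑ i, ∑ j, (X i j - Y i j) ^ 2 ≤ ∑ i, ∑ j, (X i j - Z i j) ^ 2})
    (Y : Matrix (Fin m) (Fin n) ℝ) (hY : Y ∈ convexHull ℝ S) :
    (Y.rank ≤ r → Y ∈ S) ∧ (∀ Z ∈ S, Z.rank ≤ r) := by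
  subst hS
  set f : Matrix (Fin m) (Fin n) ℝ → ℝ := fun A => ∑ i, ∑ j, (X i j - A i j) ^ 2 with hf
  refine ⟨?_, fun Z hZ => hZ.1⟩
  intro hrank
  have hne : ({Y : Matrix (Fin m) (Fin n) ℝ | Y.rank ≤ r ∧ ∀ Z : Matrix (Fin m) (Fin n) ℝ, Z.rank ≤ r →
      ∑ i, ∑ j, (X i j - Y i j) ^ 2 ≤ ∑ i, ∑ j, (X i j - Z i j) ^ 2}).Nonempty := by
    by_contra h
    rw [Set.not_nonempty_iff_eq_empty] at h
    rw [h, convexHull_empty] at hY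
    exact absurd hY (Set.notMem_empty Y)
  obtain ⟨W, hW⟩ := hne
  -- the sublevel set {A | f A ≤ f W} is convex and contains S
  have hsub : Y ∈ {A : Matrix (Fin m) (Fin n) ℝ | f A ≤ f W} := by
    refine convexHull_min ?_ ?_ hY
    · intro W' hW'
      exact hW'.2 W hW.1
    · intro A hA B hB a b ha hb hab
      simp only [Set.mem_setOf_eq] at hA hB ⊢
      have key : ∀ i j, (X i j - (a • A + b • B) i j) ^ 2 ≤
          a * (X i j - A i j) ^ 2 + b * (X i j - B i j) ^ 2 := by
        intro i j
        simp only [Matrix.add_apply, Matrix.smul_apply, smul_eq_mul]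
        have hb' : b = 1 - a := by linarith
        subst hb'
        nlinarith [mul_nonneg (mul_nonneg ha hb) (sq_nonneg (A i j - B i j))]
      calc f (a • A + b • B) ≤ ∑ i, ∑ j, (a * (X i j - A i j) ^ 2 + b * (X i j - B i j) ^ 2) := by
              apply Finset.sum_le_sum; intro i _
              exact Finset.sum_le_sum fun j _ => key i j
        _ = a * f A + b * f B := by
              simp [hf, Finset.sum_add_distrib, Finset.mul_sum]
        _ ≤ a * f W + b * f W := by
              have := hA; have := hB
              gcongr
        _ = f W := by rw [← add_mul, hab, one_mul]
  refine ⟨hrank, fun Z hZr => ?_⟩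
  have h2 : f W ≤ f Z := hW.2 Z hZr
  simp only [Set.mem_setOf_eq] at hsub
  exact le_trans hsub h2
end

section
/- The symmetric-matrix analogue of the convex-hull projection lemma holds: for X ∈ S²(Rⁿ) and r ≤ n, if Y lies in the convex hull of the set Π_{S(r)}(X) of best rank-at-most-r Frobenius approximations of X within symmetric matrices, then Y ∈ Π_{S(r)}(X) if and only if rank(Y) ≤ r. -/
/-- the symmetric-matrix analogue of the convex-hull projection
lemma: Y in the convex hull of Π_{S(r)}(X) belongs to Π_{S(r)}(X) iff rank(Y) ≤ r. -/
theorem convexHull_low_rank_projection_symm (n r : ℕ)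
    (X : Matrix (Fin n) (Fin n) ℝ) (hX : X.IsSymm)
    (S : Set (Matrix (Fin n) (Fin n) ℝ))
    (hS : S = {Y | Y.IsSymm ∧ Y.rank ≤ r ∧ ∀ Z : Matrix (Fin n) (Fin n) ℝ,
        Z.IsSymm → Z.rank ≤ r →
        ∑ i, ∑ j, (X i j - Y i j) ^ 2 ≤ ∑ i, ∑ j, (X i j - Z i j) ^ 2})
    (Y : Matrix (Fin n) (Fin n) ℝ) (hY : Y ∈ convexHull ℝ S) :
    Y ∈ S ↔ Y.rank ≤ r := by
  subst hS
  -- S is nonempty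
  obtain ⟨Z₀, hZ₀⟩ := convexHull_nonempty_iff.mp ⟨Y, hY⟩
  set m : ℝ := ∑ i, ∑ j, (X i j - Z₀ i j) ^ 2 with hm
  set f : Matrix (Fin n) (Fin n) ℝ → ℝ := fun W => ∑ i, ∑ j, (X i j - W i j) ^ 2 with hf
  -- the convex superset
  set t : Set (Matrix (Fin n) (Fin n) ℝ) := {W | W.IsSymm ∧ f W ≤ m} with ht
  have hSt : {Y : Matrix (Fin n) (Fin n) ℝ | Y.IsSymm ∧ Y.rank ≤ r ∧ ∀ Z : Matrix (Fin n) (Fin n) ℝ,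
        Z.IsSymm → Z.rank ≤ r →
        ∑ i, ∑ j, (X i j - Y i j) ^ 2 ≤ ∑ i, ∑ j, (X i j - Z i j) ^ 2} ⊆ t := by
    rintro W ⟨hWs, hWr, hWmin⟩
    exact ⟨hWs, hWmin Z₀ hZ₀.1 hZ₀.2.1⟩
  have htc : Convex ℝ t := by
    rintro W₁ ⟨h1s, h1⟩ W₂ ⟨h2s, h2⟩ a b ha hb hab
    constructor
    · exact (h1s.smul a).add (h2s.smul b)
    · have key : f (a • W₁ + b • W₂) ≤ a * f W₁ + b * f W₂ := by
        have step : ∀ i j, (X i j - (a • W₁ + b • W₂) i j) ^ 2 ≤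
            a * (X i j - W₁ i j) ^ 2 + b * (X i j - W₂ i j) ^ 2 := by
          intro i j
          simp only [Matrix.add_apply, Matrix.smul_apply, smul_eq_mul]
          have hb' : b = 1 - a := by linarith
          subst hb'
          nlinarith [mul_nonneg (mul_nonneg ha hb) (sq_nonneg (W₁ i j - W₂ i j))]
        calc f (a • W₁ + b • W₂)
            ≤ ∑ i, ∑ j, (a * (X i j - W₁ i j) ^ 2 + b * (X i j - W₂ i j) ^ 2) := by
              apply Finset.sum_le_sum
              intro i _
              exact Finset.sum_le_sum fun j _ => step i j
          _ = a * f W₁ + b * f W₂ := by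
              simp [hf, Finset.sum_add_distrib, Finset.mul_sum]
      have : a * f W₁ + b * f W₂ ≤ m := by
        calc a * f W₁ + b * f W₂ ≤ a * m + b * m := by
              gcongr
          _ = m := by rw [← add_mul, hab, one_mul]
      linarith
  have hYt : Y ∈ t := convexHull_min hSt htc hY
  constructor
  · exact fun h => h.2.1
  · intro hrank
    refine ⟨hYt.1, hrank, fun Z hZs hZr => ?_⟩
    exact le_trans hYt.2 (hZ₀.2.2 Z hZs hZr)
end
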